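/- Fix η > 0, L > 0, α_g ≥ 0, and 0 < d_min ≤ d_max. For an integer M ≥ 1, transmit power P_T > 0, and distances d : {1,…,M+1} → [d_min, d_max], define P̄_R(M, P_T, d) = (P_T η²/2)·exp(Lα_g/(M+1))·Σ_{m=1}^{M} ( Σ_{n=1}^{m} exp(−Lα_g(m−n+1)/(M+1)) / (2^{(m−n+1)/2}·d_n) + Σ_{n=m+1}^{M+1} exp(−Lα_g(n−m)/(M+1)) / (2^{(n−m)/2}·d_n) )². Then there exist constants c₁ > 0, c₂ > 0 and an integer M₀ such that for all M ≥ M₀, all P_T > 0, and all d with d_n ∈ [d_min, d_max] for every n, one has c₁·P_T·M ≤ P̄_R(M, P_T, d) ≤ c₂·P_T·M. That is, the received power of C-PASS scales on the order of 𝒪(P_T·M). -/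

import Mathlib

/-- Phase-aligned upper bound P̄_R(M, P_T, d) on the received power of C-PASS under
the symmetric configuration with maximum-ratio transmission (2^{k/2} = (√2)^k). -/
noncomputable def PbarR (η L αg : ℝ) (M : ℕ) (PT : ℝ) (d : ℕ → ℝ) : ℝ :=
  (PT * η ^ 2 / 2) * Real.exp (L * αg / (M + 1)) *
    ∑ m ∈ Finset.Icc 1 M,
      ((∑ n ∈ Finset.Icc 1 m,
          Real.exp (-(L * αg * ((m - n + 1 : ℕ) : ℝ)) / (M + 1))
            / (Real.sqrt 2 ^ (m - n + 1) * d n))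
        + ∑ n ∈ Finset.Icc (m + 1) (M + 1),
          Real.exp (-(L * αg * ((n - m : ℕ) : ℝ)) / (M + 1))
            / (Real.sqrt 2 ^ (n - m) * d n)) ^ 2

lemma geom_aux (r : ℝ) (h0 : 0 ≤ r) (h1 : r < 1) (N : ℕ) :
    ∑ k ∈ Finset.Icc 1 N, r ^ k ≤ 1 / (1 - r) := by
  have hsub : Finset.Icc 1 N ⊆ Finset.range (N + 1) := by
    intro k hk; simp only [Finset.mem_Icc, Finset.mem_range] at *; omega
  calc ∑ k ∈ Finset.Icc 1 N, r ^ k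
      ≤ ∑ k ∈ Finset.range (N + 1), r ^ k :=
        Finset.sum_le_sum_of_subset_of_nonneg hsub (fun i _ _ => pow_nonneg h0 i)
    _ = (1 - r ^ (N + 1)) / (1 - r) := by
        rw [geom_sum_eq h1.ne]
        rw [show r ^ (N+1) - 1 = -(1 - r^(N+1)) by ring, show r - 1 = -(1-r) by ring,
          neg_div_neg_eq]
    _ ≤ 1 / (1 - r) := by
        gcongr
        · nlinarith [pow_nonneg h0 (N+1)]

lemma reindex1 (r : ℝ) (m : ℕ) :
    ∑ n ∈ Finset.Icc 1 m, r ^ (m - n + 1) = ∑ k ∈ Finset.Icc 1 m, r ^ k := by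
  apply Finset.sum_nbij' (fun n => m + 1 - n) (fun k => m + 1 - k) <;>
    simp only [Finset.mem_Icc] <;> intro a ha
  · omega
  · omega
  · omega
  · omega
  · congr 1; omega

lemma reindex2 (r : ℝ) (m M : ℕ) :
    ∑ n ∈ Finset.Icc (m + 1) (M + 1), r ^ (n - m) = ∑ k ∈ Finset.Icc 1 (M + 1 - m), r ^ k := by
  apply Finset.sum_nbij' (fun n => n - m) (fun k => k + m) <;>
    simp only [Finset.mem_Icc] <;> intro a ha <;> first | omega | trivial

/-- Theorem 2, the power scaling law of C-PASS. There exist c₁, c₂ > 0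
and M₀ such that c₁·P_T·M ≤ P̄_R(M, P_T, d) ≤ c₂·P_T·M for all M ≥ M₀, all P_T > 0,
and all distance profiles d with values in [d_min, d_max]. -/
theorem stmt_16 (η L αg dmin dmax : ℝ) (hη : 0 < η) (hL : 0 < L) (hα : 0 ≤ αg)
    (hdmin : 0 < dmin) (hdd : dmin ≤ dmax) :
    ∃ c₁ > (0 : ℝ), ∃ c₂ > (0 : ℝ), ∃ M₀ : ℕ,
      ∀ M : ℕ, M₀ ≤ M → ∀ PT : ℝ, 0 < PT →
        ∀ d : ℕ → ℝ, (∀ n ∈ Finset.Icc 1 (M + 1), d n ∈ Set.Icc dmin dmax) →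
          c₁ * PT * M ≤ PbarR η L αg M PT d ∧ PbarR η L αg M PT d ≤ c₂ * PT * M := by
  have hdmax : 0 < dmax := lt_of_lt_of_le hdmin hdd
  have hs2 : (1:ℝ) < Real.sqrt 2 := by
    nlinarith [Real.sq_sqrt (by norm_num : (0:ℝ) ≤ 2), Real.sqrt_nonneg 2]
  set r : ℝ := (Real.sqrt 2)⁻¹ with hr_def
  have hr0 : 0 ≤ r := by positivity
  have hr1 : r < 1 := inv_lt_one_of_one_lt₀ hs2
  have h1r : 0 < 1 - r := by linarith
  set cLow : ℝ := Real.exp (-(L * αg)) / (Real.sqrt 2 * dmax) with hcLow_def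
  have hcLow : 0 < cLow := by positivity
  set C : ℝ := 2 * (1 / (1 - r)) * dmin⁻¹ with hC_def
  have hC : 0 < C := by positivity
  refine ⟨η ^ 2 / 2 * cLow ^ 2, by positivity, η ^ 2 / 2 * Real.exp (L * αg) * C ^ 2,
    by positivity, 0, ?_⟩
  intro M _ PT hPT d hd
  have hd' : ∀ n ∈ Finset.Icc 1 (M + 1), dmin ≤ d n ∧ d n ≤ dmax := by
    intro n hn; exact (hd n hn : _)
  -- termwise bounds on the inner sums
  have hterm_nonneg : ∀ (k : ℕ) (n : ℕ), n ∈ Finset.Icc 1 (M + 1) →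
      0 ≤ Real.exp (-(L * αg * (k : ℝ)) / (M + 1)) / (Real.sqrt 2 ^ k * d n) := by
    intro k n hn
    have hdn : 0 < d n := lt_of_lt_of_le hdmin (hd' n hn).1
    exact div_nonneg (Real.exp_nonneg _)
      (mul_nonneg (pow_nonneg (Real.sqrt_nonneg 2) k) hdn.le)
  have hterm_le : ∀ (k : ℕ) (n : ℕ), n ∈ Finset.Icc 1 (M + 1) →
      Real.exp (-(L * αg * (k : ℝ)) / (M + 1)) / (Real.sqrt 2 ^ k * d n)
        ≤ r ^ k * dmin⁻¹ := by
    intro k n hn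
    have hdn := hd' n hn
    have he1 : Real.exp (-(L * αg * (k : ℝ)) / (M + 1)) ≤ 1 := by
      rw [Real.exp_le_one_iff]
      apply div_nonpos_of_nonpos_of_nonneg
      · have : (0:ℝ) ≤ L * αg * k := by positivity
        linarith
      · positivity
    have hpow : (0:ℝ) < Real.sqrt 2 ^ k := pow_pos (by linarith) k
    calc Real.exp (-(L * αg * (k : ℝ)) / (M + 1)) / (Real.sqrt 2 ^ k * d n)
        ≤ 1 / (Real.sqrt 2 ^ k * dmin) := by
          apply div_le_div₀ zero_le_one he1 (by positivity)
          exact mul_le_mul_of_nonneg_left hdn.1 hpow.le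
      _ = r ^ k * dmin⁻¹ := by
          rw [one_div, mul_inv, hr_def, inv_pow]
  -- S m notation
  have hSlow : ∀ m ∈ Finset.Icc 1 M,
      cLow ≤ (∑ n ∈ Finset.Icc 1 m,
          Real.exp (-(L * αg * ((m - n + 1 : ℕ) : ℝ)) / (M + 1))
            / (Real.sqrt 2 ^ (m - n + 1) * d n))
        + ∑ n ∈ Finset.Icc (m + 1) (M + 1),
          Real.exp (-(L * αg * ((n - m : ℕ) : ℝ)) / (M + 1))
            / (Real.sqrt 2 ^ (n - m) * d n) := by
    intro m hm
    rw [Finset.mem_Icc] at hm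
    have hsub1 : ∀ n ∈ Finset.Icc 1 m, n ∈ Finset.Icc 1 (M + 1) := by
      intro n hn; rw [Finset.mem_Icc] at *; omega
    have hsub2 : ∀ n ∈ Finset.Icc (m + 1) (M + 1), n ∈ Finset.Icc 1 (M + 1) := by
      intro n hn; rw [Finset.mem_Icc] at *; omega
    have hB : 0 ≤ ∑ n ∈ Finset.Icc (m + 1) (M + 1),
        Real.exp (-(L * αg * ((n - m : ℕ) : ℝ)) / (M + 1))
          / (Real.sqrt 2 ^ (n - m) * d n) :=
      Finset.sum_nonneg fun n hn => hterm_nonneg _ n (hsub2 n hn)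
    have hmm : m ∈ Finset.Icc 1 m := Finset.mem_Icc.mpr ⟨hm.1, le_refl m⟩
    have hsingle := Finset.single_le_sum
      (f := fun n => Real.exp (-(L * αg * ((m - n + 1 : ℕ) : ℝ)) / (M + 1))
            / (Real.sqrt 2 ^ (m - n + 1) * d n))
      (fun n hn => hterm_nonneg _ n (hsub1 n hn)) hmm
    have hmM : m ∈ Finset.Icc 1 (M + 1) := Finset.mem_Icc.mpr ⟨hm.1, by omega⟩
    have hdm := hd' m hmM
    have hdm0 : 0 < d m := lt_of_lt_of_le hdmin hdm.1
    have hcterm : cLow ≤ Real.exp (-(L * αg * ((m - m + 1 : ℕ) : ℝ)) / (M + 1))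
        / (Real.sqrt 2 ^ (m - m + 1) * d m) := by
      rw [Nat.sub_self]
      norm_num
      apply div_le_div₀ (Real.exp_nonneg _) _ (by positivity)
      · exact mul_le_mul_of_nonneg_left hdm.2 (by linarith)
      · apply Real.exp_le_exp.mpr
        have hM1 : (1:ℝ) ≤ (M:ℝ) + 1 := by
          have : (0:ℝ) ≤ (M:ℝ) := Nat.cast_nonneg M
          linarith
        have h1 := div_le_self (mul_nonneg hL.le hα) hM1
        rw [neg_div] <;> linarith
    linarith
  have hShigh : ∀ m ∈ Finset.Icc 1 M,
      (∑ n ∈ Finset.Icc 1 m,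
          Real.exp (-(L * αg * ((m - n + 1 : ℕ) : ℝ)) / (M + 1))
            / (Real.sqrt 2 ^ (m - n + 1) * d n))
        + (∑ n ∈ Finset.Icc (m + 1) (M + 1),
          Real.exp (-(L * αg * ((n - m : ℕ) : ℝ)) / (M + 1))
            / (Real.sqrt 2 ^ (n - m) * d n)) ≤ C := by
    intro m hm
    rw [Finset.mem_Icc] at hm
    have hsub1 : ∀ n ∈ Finset.Icc 1 m, n ∈ Finset.Icc 1 (M + 1) := by
      intro n hn; rw [Finset.mem_Icc] at *; omega
    have hsub2 : ∀ n ∈ Finset.Icc (m + 1) (M + 1), n ∈ Finset.Icc 1 (M + 1) := by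
      intro n hn; rw [Finset.mem_Icc] at *; omega
    have hA : (∑ n ∈ Finset.Icc 1 m,
          Real.exp (-(L * αg * ((m - n + 1 : ℕ) : ℝ)) / (M + 1))
            / (Real.sqrt 2 ^ (m - n + 1) * d n)) ≤ (1 / (1 - r)) * dmin⁻¹ := by
      calc _ ≤ ∑ n ∈ Finset.Icc 1 m, r ^ (m - n + 1) * dmin⁻¹ :=
            Finset.sum_le_sum fun n hn => hterm_le _ n (hsub1 n hn)
        _ = (∑ n ∈ Finset.Icc 1 m, r ^ (m - n + 1)) * dmin⁻¹ := by
            rw [Finset.sum_mul]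
        _ = (∑ k ∈ Finset.Icc 1 m, r ^ k) * dmin⁻¹ := by rw [reindex1]
        _ ≤ (1 / (1 - r)) * dmin⁻¹ := by
            apply mul_le_mul_of_nonneg_right (geom_aux r hr0 hr1 m) (by positivity)
    have hB : (∑ n ∈ Finset.Icc (m + 1) (M + 1),
          Real.exp (-(L * αg * ((n - m : ℕ) : ℝ)) / (M + 1))
            / (Real.sqrt 2 ^ (n - m) * d n)) ≤ (1 / (1 - r)) * dmin⁻¹ := by
      calc _ ≤ ∑ n ∈ Finset.Icc (m + 1) (M + 1), r ^ (n - m) * dmin⁻¹ :=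
            Finset.sum_le_sum fun n hn => hterm_le _ n (hsub2 n hn)
        _ = (∑ n ∈ Finset.Icc (m + 1) (M + 1), r ^ (n - m)) * dmin⁻¹ := by
            rw [Finset.sum_mul]
        _ = (∑ k ∈ Finset.Icc 1 (M + 1 - m), r ^ k) * dmin⁻¹ := by rw [reindex2]
        _ ≤ (1 / (1 - r)) * dmin⁻¹ := by
            apply mul_le_mul_of_nonneg_right (geom_aux r hr0 hr1 _) (by positivity)
    rw [hC_def]; linarith
  -- assemble
  have hS0 : ∀ m ∈ Finset.Icc 1 M,
      (0:ℝ) ≤ (∑ n ∈ Finset.Icc 1 m,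
          Real.exp (-(L * αg * ((m - n + 1 : ℕ) : ℝ)) / (M + 1))
            / (Real.sqrt 2 ^ (m - n + 1) * d n))
        + ∑ n ∈ Finset.Icc (m + 1) (M + 1),
          Real.exp (-(L * αg * ((n - m : ℕ) : ℝ)) / (M + 1))
            / (Real.sqrt 2 ^ (n - m) * d n) :=
    fun m hm => le_trans hcLow.le (hSlow m hm)
  have hcard : (Finset.Icc 1 M).card = M := by
    rw [Nat.card_Icc]; omega
  set Ssum : ℝ := ∑ m ∈ Finset.Icc 1 M,
      ((∑ n ∈ Finset.Icc 1 m,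
          Real.exp (-(L * αg * ((m - n + 1 : ℕ) : ℝ)) / (M + 1))
            / (Real.sqrt 2 ^ (m - n + 1) * d n))
        + ∑ n ∈ Finset.Icc (m + 1) (M + 1),
          Real.exp (-(L * αg * ((n - m : ℕ) : ℝ)) / (M + 1))
            / (Real.sqrt 2 ^ (n - m) * d n)) ^ 2 with hSsumdef
  have hSsumlow : (M:ℝ) * cLow ^ 2 ≤ Ssum := by
    rw [hSsumdef]
    calc (M:ℝ) * cLow ^ 2 = ∑ _m ∈ Finset.Icc 1 M, cLow ^ 2 := by
          rw [Finset.sum_const, hcard, nsmul_eq_mul]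
      _ ≤ _ := Finset.sum_le_sum fun m hm =>
          pow_le_pow_left₀ hcLow.le (hSlow m hm) 2
  have hSsumhigh : Ssum ≤ (M:ℝ) * C ^ 2 := by
    rw [hSsumdef]
    calc _ ≤ ∑ _m ∈ Finset.Icc 1 M, C ^ 2 :=
          Finset.sum_le_sum fun m hm => pow_le_pow_left₀ (hS0 m hm) (hShigh m hm) 2
      _ = (M:ℝ) * C ^ 2 := by rw [Finset.sum_const, hcard, nsmul_eq_mul]
  have hSsum0 : 0 ≤ Ssum := le_trans (by positivity) hSsumlow
  have hE1 : 1 ≤ Real.exp (L * αg / (M + 1)) := Real.one_le_exp (by positivity)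
  have hEhigh : Real.exp (L * αg / (M + 1)) ≤ Real.exp (L * αg) := by
    apply Real.exp_le_exp.mpr
    apply div_le_self (by positivity)
    have : (0:ℝ) ≤ (M:ℝ) := Nat.cast_nonneg M
    linarith
  have hP : PbarR η L αg M PT d = (PT * η ^ 2 / 2) * Real.exp (L * αg / (M + 1)) * Ssum := rfl
  have hA0 : (0:ℝ) < PT * η ^ 2 / 2 := by positivity
  constructor
  · calc η ^ 2 / 2 * cLow ^ 2 * PT * M = (PT * η ^ 2 / 2) * ((M:ℝ) * cLow ^ 2) := by ring
      _ ≤ (PT * η ^ 2 / 2) * Ssum := mul_le_mul_of_nonneg_left hSsumlow hA0.le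
      _ ≤ (PT * η ^ 2 / 2) * Real.exp (L * αg / (M + 1)) * Ssum := by
          rw [mul_assoc]
          exact mul_le_mul_of_nonneg_left (le_mul_of_one_le_left hSsum0 hE1) hA0.le
      _ = PbarR η L αg M PT d := hP.symm
  · calc PbarR η L αg M PT d = (PT * η ^ 2 / 2) * Real.exp (L * αg / (M + 1)) * Ssum := hP
      _ ≤ (PT * η ^ 2 / 2) * Real.exp (L * αg) * ((M:ℝ) * C ^ 2) := by
          apply mul_le_mul
          · exact mul_le_mul_of_nonneg_left hEhigh hA0.le
          · exact hSsumhigh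
          · exact hSsum0
          · positivity
      _ = η ^ 2 / 2 * Real.exp (L * αg) * C ^ 2 * PT * M := by ring
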